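/- arXiv:2407.02257 — 3 statements merged into one kernel-verified Lean document; each statement's English description precedes it below -/
import Mathlib

section
/- With Ω₁ = (-1,0)×(0,1), Ω₂ = (0,1)², and ψ_m(x₁,x₂) = sin(πm x₂) sinh(πm(1−|x₁|))/sinh(πm), the Dirichlet inner product satisfies ∫_Ω ∇ψ_n · ∇ψ_m = 0 for n ≠ m, and ∫_Ω |∇ψ_m|² = πm sinh(2πm) / (2 sinh²(πm)). -/
open Real MeasureTheory

/-!
Off the null line `x₁ = 0` the function `ψ_m` is smooth, and `∇ψ_n · ∇ψ_m` is a sum of two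
products `f(x₁) g(x₂)` with `g = sin(πn·) sin(πm·)` and `g = cos(πn·) cos(πm·)`. Integrating such
products over the rectangle factorises, so the orthogonality of `sin(πk·)` and of `cos(πk·)` on
`(0, 1)` kills the cross terms. For `n = m` the remaining `x₁`-integrand is
`cosh² + sinh² = cosh(2·)` evaluated at `πm(1 - |x₁|)`.
-/

/-- `ψ_m(x₁,x₂) = sin(πm x₂) sinh(πm(1-|x₁|)) / sinh(πm)` viewed as a function on `ℝ × ℝ`. -/
noncomputable def psi (m : ℕ) (p : ℝ × ℝ) : ℝ :=
  Real.sin (π * m * p.2) * Real.sinh (π * m * (1 - |p.1|)) / Real.sinh (π * m)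

/-- Pointwise dot product of the gradients of two functions on `ℝ × ℝ`. -/
noncomputable def gradDot (u v : ℝ × ℝ → ℝ) (p : ℝ × ℝ) : ℝ :=
  fderiv ℝ u p (1, 0) * fderiv ℝ v p (1, 0) + fderiv ℝ u p (0, 1) * fderiv ℝ v p (0, 1)

/-- Ω = (-1,1) × (0,1). -/
def Omega : Set (ℝ × ℝ) := (Set.Ioo (-1 : ℝ) 1) ×ˢ (Set.Ioo (0 : ℝ) 1)

theorem integral_cos_mul_eq {c : ℝ} (hc : c ≠ 0) :
    ∫ y in (0 : ℝ)..1, cos (c * y) = sin c / c := by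
  simp [intervalIntegral.integral_comp_mul_left _ hc, div_eq_inv_mul]

theorem integral_cosh_mul_eq {c : ℝ} (hc : c ≠ 0) :
    ∫ x in (0 : ℝ)..1, cosh (c * x) = sinh c / c := by
  rw [intervalIntegral.integral_comp_mul_left _ hc, intervalIntegral.integral_eq_sub_of_hasDerivAt
    (fun x _ => hasDerivAt_sinh x) (continuous_cosh.intervalIntegrable _ _)]
  simp [div_eq_inv_mul]

theorem integral_cos_pi_int_mul {k : ℤ} (hk : k ≠ 0) :
    ∫ y in (0 : ℝ)..1, cos (π * k * y) = 0 := by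
  rw [integral_cos_mul_eq (by positivity), mul_comm, sin_int_mul_pi, zero_div]

theorem integral_cos_pi_nat_sub_mul (n m : ℕ) :
    ∫ y in (0 : ℝ)..1, cos (π * ((n : ℤ) - m : ℤ) * y) = if n = m then 1 else 0 := by
  split_ifs with h
  · simp [h]
  · exact integral_cos_pi_int_mul (by omega)

theorem integral_sin_mul_sin {n m : ℕ} (h : n + m ≠ 0) :
    ∫ y in (0 : ℝ)..1, sin (π * n * y) * sin (π * m * y) = if n = m then 1 / 2 else 0 := by
  have hsum := integral_cos_pi_int_mul (k := ((n + m : ℕ) : ℤ)) (by omega)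
  have hprod (y : ℝ) : sin (π * n * y) * sin (π * m * y) =
      (cos (π * ((n : ℤ) - m : ℤ) * y) - cos (π * ((n + m : ℕ) : ℤ) * y)) / 2 := by
    rw [eq_div_iff two_ne_zero, mul_comm, ← mul_assoc, two_mul_sin_mul_sin]
    push_cast
    ring_nf
  simp_rw [hprod]
  rw [intervalIntegral.integral_div, intervalIntegral.integral_sub
    (Continuous.intervalIntegrable (by fun_prop) _ _)
    (Continuous.intervalIntegrable (by fun_prop) _ _),
    integral_cos_pi_nat_sub_mul, hsum]
  split_ifs <;> norm_num

theorem integral_cos_mul_cos {n m : ℕ} (h : n + m ≠ 0) :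
    ∫ y in (0 : ℝ)..1, cos (π * n * y) * cos (π * m * y) = if n = m then 1 / 2 else 0 := by
  have hsum := integral_cos_pi_int_mul (k := ((n + m : ℕ) : ℤ)) (by omega)
  have hprod (y : ℝ) : cos (π * n * y) * cos (π * m * y) =
      (cos (π * ((n : ℤ) - m : ℤ) * y) + cos (π * ((n + m : ℕ) : ℤ) * y)) / 2 := by
    rw [eq_div_iff two_ne_zero, mul_comm, ← mul_assoc, two_mul_cos_mul_cos]
    push_cast
    ring_nf
  simp_rw [hprod]
  rw [intervalIntegral.integral_div, intervalIntegral.integral_add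
    (Continuous.intervalIntegrable (by fun_prop) _ _)
    (Continuous.intervalIntegrable (by fun_prop) _ _),
    integral_cos_pi_nat_sub_mul, hsum]
  split_ifs <;> norm_num

theorem intervalIntegral_comp_abs {f : ℝ → ℝ} (hf : Continuous f) {c : ℝ} (hc : 0 ≤ c) :
    ∫ x in -c..c, f |x| = 2 * ∫ x in (0 : ℝ)..c, f x := by
  have hint : Continuous fun x => f |x| := by fun_prop
  rw [← intervalIntegral.integral_add_adjacent_intervals (b := 0) (hint.intervalIntegrable _ _)
    (hint.intervalIntegrable _ _)]
  have hneg : ∫ x in -c..0, f |x| = ∫ x in -c..0, f (-x) :=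
    intervalIntegral.integral_congr fun x hx => by
      rw [Set.uIcc_of_le (by linarith)] at hx
      rw [abs_of_nonpos hx.2]
  have hpos : ∫ x in (0 : ℝ)..c, f |x| = ∫ x in (0 : ℝ)..c, f x :=
    intervalIntegral.integral_congr fun x hx => by
      rw [Set.uIcc_of_le hc] at hx
      rw [abs_of_nonneg hx.1]
  rw [hneg, hpos, intervalIntegral.integral_comp_neg, neg_neg, neg_zero, two_mul]

theorem integral_cosh_mul_cosh_add_integral_sinh_mul_sinh {a : ℝ} (ha : a ≠ 0) :
    (∫ x in (-1 : ℝ)..1, cosh (a * (1 - |x|)) * cosh (a * (1 - |x|))) +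
      ∫ x in (-1 : ℝ)..1, sinh (a * (1 - |x|)) * sinh (a * (1 - |x|)) = sinh (2 * a) / a := by
  rw [← intervalIntegral.integral_add (Continuous.intervalIntegrable (by fun_prop) _ _)
    (Continuous.intervalIntegrable (by fun_prop) _ _)]
  have hdouble (x : ℝ) : cosh (a * (1 - |x|)) * cosh (a * (1 - |x|)) +
      sinh (a * (1 - |x|)) * sinh (a * (1 - |x|)) = cosh (2 * a * (1 - |x|)) := by
    rw [mul_assoc, cosh_two_mul, sq, sq]
  simp_rw [hdouble]
  rw [intervalIntegral_comp_abs (f := fun u => cosh (2 * a * (1 - u))) (by fun_prop) zero_le_one,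
    intervalIntegral.integral_comp_sub_left (fun u => cosh (2 * a * u)), sub_self, sub_zero,
    integral_cosh_mul_eq (by positivity)]
  field_simp

theorem fderiv_psi_apply (m : ℕ) {p : ℝ × ℝ} (hp : p.1 ≠ 0) (v : ℝ × ℝ) :
    fderiv ℝ (psi m) p v = π * m / sinh (π * m) *
      (-(SignType.sign p.1 : ℝ) * cosh (π * m * (1 - |p.1|)) * sin (π * m * p.2) * v.1
        + cos (π * m * p.2) * sinh (π * m * (1 - |p.1|)) * v.2) := by
  have habs : HasFDerivAt (fun q : ℝ × ℝ => |q.1|)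
      ((SignType.sign p.1 : ℝ) • ContinuousLinearMap.fst ℝ ℝ ℝ) p :=
    (hasDerivAt_abs hp).comp_hasFDerivAt p hasFDerivAt_fst
  have h := ((((hasFDerivAt_snd (p := p)).const_mul (π * m)).sin).fun_mul
      ((habs.const_sub 1).const_mul (π * m)).sinh).mul_const (sinh (π * m))⁻¹
  unfold psi
  simp only [div_eq_mul_inv] at h ⊢
  rw [h.fderiv]
  simp
  ring

theorem gradDot_psi (n m : ℕ) {p : ℝ × ℝ} (hp : p.1 ≠ 0) :
    gradDot (psi n) (psi m) p = π * n / sinh (π * n) * (π * m / sinh (π * m)) *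
      (cosh (π * n * (1 - |p.1|)) * cosh (π * m * (1 - |p.1|)) *
          (sin (π * n * p.2) * sin (π * m * p.2))
        + sinh (π * n * (1 - |p.1|)) * sinh (π * m * (1 - |p.1|)) *
          (cos (π * n * p.2) * cos (π * m * p.2))) := by
  have hsign : (SignType.sign p.1 : ℝ) ^ 2 = 1 := by
    rcases hp.lt_or_gt with h | h <;> simp [h]
  simp only [gradDot, fderiv_psi_apply _ hp]
  linear_combination (π * n / sinh (π * n) * (π * m / sinh (π * m)) * cosh (π * n * (1 - |p.1|)) *
    cosh (π * m * (1 - |p.1|)) * sin (π * n * p.2) * sin (π * m * p.2)) * hsign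

theorem integral_Omega_mul (f g : ℝ → ℝ) :
    ∫ p in Omega, f p.1 * g p.2 = (∫ x in (-1 : ℝ)..1, f x) * ∫ y in (0 : ℝ)..1, g y := by
  rw [Omega, Measure.volume_eq_prod, setIntegral_prod_mul,
    intervalIntegral.integral_of_le (by norm_num), intervalIntegral.integral_of_le zero_le_one,
    integral_Ioc_eq_integral_Ioo, integral_Ioc_eq_integral_Ioo]

theorem integrableOn_Omega_mul {f g : ℝ → ℝ} (hf : Continuous f) (hg : Continuous g) :
    IntegrableOn (fun p : ℝ × ℝ => f p.1 * g p.2) Omega := by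
  rw [IntegrableOn, Omega, Measure.volume_eq_prod, ← Measure.prod_restrict]
  exact (hf.integrableOn_Icc.mono_set Set.Ioo_subset_Icc_self).mul_prod
    (hg.integrableOn_Icc.mono_set Set.Ioo_subset_Icc_self)

theorem integral_Omega_mul_add_mul {f₁ g₁ f₂ g₂ : ℝ → ℝ} (hf₁ : Continuous f₁)
    (hg₁ : Continuous g₁) (hf₂ : Continuous f₂) (hg₂ : Continuous g₂) :
    ∫ p in Omega, (f₁ p.1 * g₁ p.2 + f₂ p.1 * g₂ p.2) =
      (∫ x in (-1 : ℝ)..1, f₁ x) * (∫ y in (0 : ℝ)..1, g₁ y) +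
        (∫ x in (-1 : ℝ)..1, f₂ x) * ∫ y in (0 : ℝ)..1, g₂ y := by
  rw [integral_add (integrableOn_Omega_mul hf₁ hg₁) (integrableOn_Omega_mul hf₂ hg₂),
    integral_Omega_mul, integral_Omega_mul]

theorem integral_gradDot_psi (n m : ℕ) :
    ∫ p in Omega, gradDot (psi n) (psi m) p = π * n / sinh (π * n) * (π * m / sinh (π * m)) *
      ((∫ x in (-1 : ℝ)..1, cosh (π * n * (1 - |x|)) * cosh (π * m * (1 - |x|))) *
          (∫ y in (0 : ℝ)..1, sin (π * n * y) * sin (π * m * y)) +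
        (∫ x in (-1 : ℝ)..1, sinh (π * n * (1 - |x|)) * sinh (π * m * (1 - |x|))) *
          ∫ y in (0 : ℝ)..1, cos (π * n * y) * cos (π * m * y)) := by
  have hae : ∀ᵐ p : ℝ × ℝ, p.1 ≠ 0 := by
    rw [Measure.volume_eq_prod]
    exact Measure.quasiMeasurePreserving_fst.ae (Measure.ae_ne volume 0)
  rw [setIntegral_congr_ae (s := Omega) (measurableSet_Ioo.prod measurableSet_Ioo)
      (hae.mono fun p hp _ => gradDot_psi n m hp), integral_const_mul]
  congr 1
  exact integral_Omega_mul_add_mul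
    (f₁ := fun x => cosh (π * n * (1 - |x|)) * cosh (π * m * (1 - |x|)))
    (g₁ := fun y => sin (π * n * y) * sin (π * m * y))
    (f₂ := fun x => sinh (π * n * (1 - |x|)) * sinh (π * m * (1 - |x|)))
    (g₂ := fun y => cos (π * n * y) * cos (π * m * y))
    (by fun_prop) (by fun_prop) (by fun_prop) (by fun_prop)

theorem psi_dirichlet_orthogonality_general (n m : ℕ) (hm : 0 < m) :
    (n ≠ m → ∫ p in Omega, gradDot (psi n) (psi m) p = 0) ∧
    (∫ p in Omega, gradDot (psi m) (psi m) p
      = π * m * Real.sinh (2 * π * m) / (2 * (Real.sinh (π * m)) ^ 2)) := by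
  refine ⟨fun hne => ?_, ?_⟩
  · rw [integral_gradDot_psi, integral_sin_mul_sin (by omega), integral_cos_mul_cos (by omega),
      if_neg hne]
    ring
  · have ha : π * m ≠ 0 := by positivity
    have hs : sinh (π * m) ≠ 0 := by rwa [Ne, sinh_eq_zero]
    rw [integral_gradDot_psi, integral_sin_mul_sin (by omega), integral_cos_mul_cos (by omega),
      if_pos rfl, ← add_mul, integral_cosh_mul_cosh_add_integral_sinh_mul_sinh ha, mul_assoc 2 π]
    field_simp

theorem psi_dirichlet_orthogonality (n m : ℕ) (hn : 0 < n) (hm : 0 < m) :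
    (n ≠ m → ∫ p in Omega, gradDot (psi n) (psi m) p = 0) ∧
    (∫ p in Omega, gradDot (psi m) (psi m) p
      = π * m * Real.sinh (2 * π * m) / (2 * (Real.sinh (π * m)) ^ 2)) :=
  psi_dirichlet_orthogonality_general n m hm
end

section
/- Let Z₀ sin(πn x₂) = sin(πn x₂) sinh(πn(i+1−x₁))/sinh(πn) and Z₁ sin(πn x₂) = sin(πn x₂) sinh(πn(x₁−i))/sinh(πn) be the two harmonic extensions to the square Ω_{i+1} = (i, i+1)×(0,1). Then for all positive integers n, m: (a) ∫_{Ω_{i+1}} ∇Z₀ sin(πn x₂) · ∇Z₀ sin(πm x₂) = 0 if n ≠ m; (b) ∫_{Ω_{i+1}} ∇Z₀ sin(πn x₂) · ∇Z₁ sin(πn x₂) = −πn/(2 sinh(πn)); (c) ∫_{Ω_{i+1}} |∇Z₀ sin(πn x₂)|² = πn sinh(2πn)/(4 sinh²(πn)). -/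
open Real MeasureTheory

/-- Harmonic extension from the left edge of the square `(i, i+1) × (0,1)`. -/
noncomputable def Z0 (i : ℤ) (n : ℕ) (p : ℝ × ℝ) : ℝ :=
  Real.sin (π * n * p.2) * Real.sinh (π * n * ((i : ℝ) + 1 - p.1)) / Real.sinh (π * n)

/-- Harmonic extension from the right edge of the square `(i, i+1) × (0,1)`. -/
noncomputable def Z1 (i : ℤ) (n : ℕ) (p : ℝ × ℝ) : ℝ :=
  Real.sin (π * n * p.2) * Real.sinh (π * n * (p.1 - (i : ℝ))) / Real.sinh (π * n)

/-- The square layer `Ω_{i+1} = (i, i+1) × (0, 1)`. -/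
def OmegaSq (i : ℤ) : Set (ℝ × ℝ) := (Set.Ioo (i : ℝ) ((i : ℝ) + 1)) ×ˢ (Set.Ioo (0 : ℝ) 1)

/-! ### Auxiliary lemmas -/

lemma fderiv_Z0_apply (i : ℤ) (n : ℕ) (p : ℝ × ℝ) (v : ℝ × ℝ) :
    fderiv ℝ (Z0 i n) p v =
      v.1 * (-(π*n) * Real.cosh (π*n*((i:ℝ)+1-p.1)) * Real.sin (π*n*p.2) / Real.sinh (π*n))
      + v.2 * ((π*n) * Real.cos (π*n*p.2) * Real.sinh (π*n*((i:ℝ)+1-p.1)) / Real.sinh (π*n)) := by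
  have h1 : HasFDerivAt (fun q : ℝ×ℝ => Real.sin (π*n*q.2))
      ((Real.cos (π*n*p.2) * (π*n*1)) • ContinuousLinearMap.snd ℝ ℝ ℝ) p :=
    HasDerivAt.comp_hasFDerivAt (𝕜 := ℝ) p ((Real.hasDerivAt_sin (π*n*p.2)).comp p.2
      ((hasDerivAt_id p.2).const_mul (π*(n:ℝ)))) hasFDerivAt_snd
  have h2 : HasFDerivAt (fun q : ℝ×ℝ => Real.sinh (π*n*((i:ℝ)+1-q.1)))
      ((Real.cosh (π*n*((i:ℝ)+1-p.1)) * (π*n*(-1))) • ContinuousLinearMap.fst ℝ ℝ ℝ) p := by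
    have hin : HasDerivAt (fun x : ℝ => π*n*((i:ℝ)+1-x)) (π*n*(-1)) p.1 :=
      (((hasDerivAt_id p.1).const_sub ((i:ℝ)+1))).const_mul (π*(n:ℝ))
    exact HasDerivAt.comp_hasFDerivAt (𝕜 := ℝ) p
      ((Real.hasDerivAt_sinh (π*n*((i:ℝ)+1-p.1))).comp p.1 hin) hasFDerivAt_fst
  have h := (h1.mul h2).mul_const (Real.sinh (π*(n:ℝ)))⁻¹
  have hZ : HasFDerivAt (Z0 i n)
      ((Real.sinh (π*(n:ℝ)))⁻¹ • (Real.sin (π*n*p.2) •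
        (Real.cosh (π*n*((i:ℝ)+1-p.1)) * (π*n*(-1))) • ContinuousLinearMap.fst ℝ ℝ ℝ
        + Real.sinh (π*n*((i:ℝ)+1-p.1)) •
        (Real.cos (π*n*p.2) * (π*n*1)) • ContinuousLinearMap.snd ℝ ℝ ℝ)) p := by
    unfold Z0; simp only [div_eq_mul_inv]; exact h
  rw [hZ.fderiv]
  simp [ContinuousLinearMap.smul_apply, div_eq_mul_inv]
  ring

lemma fderiv_Z1_apply (i : ℤ) (n : ℕ) (p : ℝ × ℝ) (v : ℝ × ℝ) :
    fderiv ℝ (Z1 i n) p v =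
      v.1 * ((π*n) * Real.cosh (π*n*(p.1-(i:ℝ))) * Real.sin (π*n*p.2) / Real.sinh (π*n))
      + v.2 * ((π*n) * Real.cos (π*n*p.2) * Real.sinh (π*n*(p.1-(i:ℝ))) / Real.sinh (π*n)) := by
  have h1 : HasFDerivAt (fun q : ℝ×ℝ => Real.sin (π*n*q.2))
      ((Real.cos (π*n*p.2) * (π*n*1)) • ContinuousLinearMap.snd ℝ ℝ ℝ) p :=
    HasDerivAt.comp_hasFDerivAt (𝕜 := ℝ) p ((Real.hasDerivAt_sin (π*n*p.2)).comp p.2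
      ((hasDerivAt_id p.2).const_mul (π*(n:ℝ)))) hasFDerivAt_snd
  have h2 : HasFDerivAt (fun q : ℝ×ℝ => Real.sinh (π*n*(q.1-(i:ℝ))))
      ((Real.cosh (π*n*(p.1-(i:ℝ))) * (π*n*1)) • ContinuousLinearMap.fst ℝ ℝ ℝ) p := by
    have hin : HasDerivAt (fun x : ℝ => π*n*(x-(i:ℝ))) (π*n*1) p.1 :=
      (((hasDerivAt_id p.1).sub_const ((i:ℝ)))).const_mul (π*(n:ℝ))
    exact HasDerivAt.comp_hasFDerivAt (𝕜 := ℝ) p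
      ((Real.hasDerivAt_sinh (π*n*(p.1-(i:ℝ)))).comp p.1 hin) hasFDerivAt_fst
  have h := (h1.mul h2).mul_const (Real.sinh (π*(n:ℝ)))⁻¹
  have hZ : HasFDerivAt (Z1 i n)
      ((Real.sinh (π*(n:ℝ)))⁻¹ • (Real.sin (π*n*p.2) •
        (Real.cosh (π*n*(p.1-(i:ℝ))) * (π*n*1)) • ContinuousLinearMap.fst ℝ ℝ ℝ
        + Real.sinh (π*n*(p.1-(i:ℝ))) •
        (Real.cos (π*n*p.2) * (π*n*1)) • ContinuousLinearMap.snd ℝ ℝ ℝ)) p := by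
    unfold Z1; simp only [div_eq_mul_inv]; exact h
  rw [hZ.fderiv]
  simp [ContinuousLinearMap.smul_apply, div_eq_mul_inv]
  ring

lemma int_cos_mul (k : ℝ) (hk : k ≠ 0) :
    ∫ y in (0:ℝ)..1, Real.cos (k*y) = Real.sin k / k := by
  have H : ∀ y ∈ Set.uIcc (0:ℝ) 1, HasDerivAt (fun t => Real.sin (k*t)/k) (Real.cos (k*y)) y := by
    intro y _
    have h := ((Real.hasDerivAt_sin (k*y)).comp y ((hasDerivAt_id y).const_mul k)).div_const k
    have e : Real.cos (k*y) * (k*1) / k = Real.cos (k*y) := by field_simp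
    rwa [e] at h
  rw [intervalIntegral.integral_eq_sub_of_hasDerivAt H
    ((Real.continuous_cos.comp (continuous_const.mul continuous_id)).intervalIntegrable 0 1)]
  simp

lemma int_cosh_affine (a b c d : ℝ) (hc : c ≠ 0) :
    ∫ x in a..b, Real.cosh (c*x+d) = (Real.sinh (c*b+d) - Real.sinh (c*a+d))/c := by
  have H : ∀ x ∈ Set.uIcc a b, HasDerivAt (fun t => Real.sinh (c*t+d)/c) (Real.cosh (c*x+d)) x := by
    intro x _
    have h := ((Real.hasDerivAt_sinh (c*x+d)).comp x
      (((hasDerivAt_id x).const_mul c).add_const d)).div_const c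
    have e : Real.cosh (c*x+d) * (c*1) / c = Real.cosh (c*x+d) := by field_simp
    rwa [e] at h
  rw [intervalIntegral.integral_eq_sub_of_hasDerivAt H
    ((Real.continuous_cosh.comp (by continuity)).intervalIntegrable a b)]
  ring

lemma J_ss (n m : ℕ) (hn : 0 < n) (hm : 0 < m) :
    ∫ y in (0:ℝ)..1, Real.sin (π*n*y) * Real.sin (π*m*y)
      = if n = m then 1/2 else 0 := by
  rcases eq_or_ne n m with rfl | hnm
  · rw [if_pos rfl]
    have hpt : ∀ y : ℝ, Real.sin (π*n*y) * Real.sin (π*n*y)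
        = (1 - Real.cos ((2*(π*n))*y))/2 := by
      intro y
      have h2 : (2*(π*(n:ℝ)))*y = π*n*y + π*n*y := by ring
      rw [h2, Real.cos_add]
      nlinarith [Real.sin_sq_add_cos_sq (π*(n:ℝ)*y)]
    simp only [hpt]
    have hI : IntervalIntegrable (fun y : ℝ => Real.cos ((2*(π*(n:ℝ)))*y)) volume 0 1 := by
      apply Continuous.intervalIntegrable; continuity
    rw [intervalIntegral.integral_div,
      intervalIntegral.integral_sub (intervalIntegrable_const) hI,
      int_cos_mul _ (by positivity)]
    have : Real.sin (2*(π*(n:ℝ))) = 0 := by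
      have : 2*(π*(n:ℝ)) = ((2*n : ℕ):ℝ) * π := by push_cast; ring
      rw [this, Real.sin_nat_mul_pi]
    rw [this]
    simp
  · rw [if_neg hnm]
    have hpt : ∀ y : ℝ, Real.sin (π*n*y) * Real.sin (π*m*y)
        = (Real.cos ((π*n-π*m)*y) - Real.cos ((π*n+π*m)*y))/2 := by
      intro y
      have e1 : (π*(n:ℝ)-π*m)*y = π*n*y - π*m*y := by ring
      have e2 : (π*(n:ℝ)+π*m)*y = π*n*y + π*m*y := by ring
      rw [e1, e2, Real.cos_sub, Real.cos_add]; ring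
    simp only [hpt]
    have hd : (π*(n:ℝ)-π*m) ≠ 0 := by
      have : (n:ℝ) ≠ m := by exact_mod_cast hnm
      have hne : (π*(n:ℝ)-π*m) = π*((n:ℝ)-m) := by ring
      rw [hne]
      exact mul_ne_zero Real.pi_ne_zero (sub_ne_zero.mpr this)
    have hs : (π*(n:ℝ)+π*m) ≠ 0 := by positivity
    have hI1 : IntervalIntegrable (fun y : ℝ => Real.cos ((π*(n:ℝ)-π*m)*y)) volume 0 1 := by
      apply Continuous.intervalIntegrable; continuity
    have hI2 : IntervalIntegrable (fun y : ℝ => Real.cos ((π*(n:ℝ)+π*m)*y)) volume 0 1 := by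
      apply Continuous.intervalIntegrable; continuity
    rw [intervalIntegral.integral_div,
      intervalIntegral.integral_sub hI1 hI2,
      int_cos_mul _ hd, int_cos_mul _ hs]
    have h1 : Real.sin (π*(n:ℝ)-π*m) = 0 := by
      have : π*(n:ℝ)-π*m = (((n:ℤ)-m : ℤ):ℝ) * π := by push_cast; ring
      rw [this, Real.sin_int_mul_pi]
    have h2 : Real.sin (π*(n:ℝ)+π*m) = 0 := by
      have : π*(n:ℝ)+π*m = (((n:ℤ)+m : ℤ):ℝ) * π := by push_cast; ring
      rw [this, Real.sin_int_mul_pi]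
    rw [h1, h2]
    simp

lemma J_cc (n m : ℕ) (hn : 0 < n) (hm : 0 < m) :
    ∫ y in (0:ℝ)..1, Real.cos (π*n*y) * Real.cos (π*m*y)
      = if n = m then 1/2 else 0 := by
  rcases eq_or_ne n m with rfl | hnm
  · rw [if_pos rfl]
    have hpt : ∀ y : ℝ, Real.cos (π*n*y) * Real.cos (π*n*y)
        = (1 + Real.cos ((2*(π*n))*y))/2 := by
      intro y
      have h2 : (2*(π*(n:ℝ)))*y = π*n*y + π*n*y := by ring
      rw [h2, Real.cos_add]
      nlinarith [Real.sin_sq_add_cos_sq (π*(n:ℝ)*y)]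
    simp only [hpt]
    have hI : IntervalIntegrable (fun y : ℝ => Real.cos ((2*(π*(n:ℝ)))*y)) volume 0 1 := by
      apply Continuous.intervalIntegrable; continuity
    rw [intervalIntegral.integral_div,
      intervalIntegral.integral_add (intervalIntegrable_const) hI,
      int_cos_mul _ (by positivity)]
    have : Real.sin (2*(π*(n:ℝ))) = 0 := by
      have : 2*(π*(n:ℝ)) = ((2*n : ℕ):ℝ) * π := by push_cast; ring
      rw [this, Real.sin_nat_mul_pi]
    rw [this]
    simp
  · rw [if_neg hnm]
    have hpt : ∀ y : ℝ, Real.cos (π*n*y) * Real.cos (π*m*y)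
        = (Real.cos ((π*n-π*m)*y) + Real.cos ((π*n+π*m)*y))/2 := by
      intro y
      have e1 : (π*(n:ℝ)-π*m)*y = π*n*y - π*m*y := by ring
      have e2 : (π*(n:ℝ)+π*m)*y = π*n*y + π*m*y := by ring
      rw [e1, e2, Real.cos_sub, Real.cos_add]; ring
    simp only [hpt]
    have hd : (π*(n:ℝ)-π*m) ≠ 0 := by
      have : (n:ℝ) ≠ m := by exact_mod_cast hnm
      have hne : (π*(n:ℝ)-π*m) = π*((n:ℝ)-m) := by ring
      rw [hne]
      exact mul_ne_zero Real.pi_ne_zero (sub_ne_zero.mpr this)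
    have hs : (π*(n:ℝ)+π*m) ≠ 0 := by positivity
    have hI1 : IntervalIntegrable (fun y : ℝ => Real.cos ((π*(n:ℝ)-π*m)*y)) volume 0 1 := by
      apply Continuous.intervalIntegrable; continuity
    have hI2 : IntervalIntegrable (fun y : ℝ => Real.cos ((π*(n:ℝ)+π*m)*y)) volume 0 1 := by
      apply Continuous.intervalIntegrable; continuity
    rw [intervalIntegral.integral_div,
      intervalIntegral.integral_add hI1 hI2,
      int_cos_mul _ hd, int_cos_mul _ hs]
    have h1 : Real.sin (π*(n:ℝ)-π*m) = 0 := by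
      have : π*(n:ℝ)-π*m = (((n:ℤ)-m : ℤ):ℝ) * π := by push_cast; ring
      rw [this, Real.sin_int_mul_pi]
    have h2 : Real.sin (π*(n:ℝ)+π*m) = 0 := by
      have : π*(n:ℝ)+π*m = (((n:ℤ)+m : ℤ):ℝ) * π := by push_cast; ring
      rw [this, Real.sin_int_mul_pi]
    rw [h1, h2]
    simp

/-- Splitting a product-form integral over the square. -/
lemma integral_prod_split (i : ℤ) (F : ℝ × ℝ → ℝ) (a b u v : ℝ → ℝ)
    (hF : ∀ p : ℝ × ℝ, F p = a p.1 * u p.2 + b p.1 * v p.2)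
    (ha : Continuous a) (hb : Continuous b) (hu : Continuous u) (hv : Continuous v) :
    ∫ p in OmegaSq i, F p
      = (∫ x in (i:ℝ)..((i:ℝ)+1), a x) * (∫ y in (0:ℝ)..1, u y)
        + (∫ x in (i:ℝ)..((i:ℝ)+1), b x) * (∫ y in (0:ℝ)..1, v y) := by
  have hcont : Continuous F := by
    have : F = fun p : ℝ × ℝ => a p.1 * u p.2 + b p.1 * v p.2 := funext hF
    rw [this]
    exact ((ha.comp continuous_fst).mul (hu.comp continuous_snd)).add
      ((hb.comp continuous_fst).mul (hv.comp continuous_snd))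
  have hIcc : IsCompact ((Set.Icc (i:ℝ) ((i:ℝ)+1)) ×ˢ (Set.Icc (0:ℝ) 1)) :=
    isCompact_Icc.prod isCompact_Icc
  have hInt : IntegrableOn F ((Set.Ioo (i:ℝ) ((i:ℝ)+1)) ×ˢ (Set.Ioo (0:ℝ) 1)) :=
    (hcont.continuousOn.integrableOn_compact hIcc).mono_set
      (Set.prod_mono Set.Ioo_subset_Icc_self Set.Ioo_subset_Icc_self)
  have hu' : IntegrableOn u (Set.Ioo (0:ℝ) 1) :=
    (hu.integrableOn_Icc).mono_set Set.Ioo_subset_Icc_self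
  have hv' : IntegrableOn v (Set.Ioo (0:ℝ) 1) :=
    (hv.integrableOn_Icc).mono_set Set.Ioo_subset_Icc_self
  have ha' : IntegrableOn a (Set.Ioo (i:ℝ) ((i:ℝ)+1)) :=
    (ha.integrableOn_Icc).mono_set Set.Ioo_subset_Icc_self
  have hb' : IntegrableOn b (Set.Ioo (i:ℝ) ((i:ℝ)+1)) :=
    (hb.integrableOn_Icc).mono_set Set.Ioo_subset_Icc_self
  have hioo1 : ∀ f : ℝ → ℝ, ∫ y in Set.Ioo (0:ℝ) 1, f y = ∫ y in (0:ℝ)..1, f y := by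
    intro f
    rw [intervalIntegral.integral_of_le zero_le_one, integral_Ioc_eq_integral_Ioo]
  have hioo2 : ∀ f : ℝ → ℝ, ∫ x in Set.Ioo (i:ℝ) ((i:ℝ)+1), f x = ∫ x in (i:ℝ)..((i:ℝ)+1), f x := by
    intro f
    rw [intervalIntegral.integral_of_le (by linarith), integral_Ioc_eq_integral_Ioo]
  rw [show OmegaSq i = (Set.Ioo (i:ℝ) ((i:ℝ)+1)) ×ˢ (Set.Ioo (0:ℝ) 1) from rfl]
  rw [Measure.volume_eq_prod] at hInt ⊢
  rw [setIntegral_prod _ hInt]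
  simp only [hF]
  have inner : ∀ x : ℝ, (∫ y in Set.Ioo (0:ℝ) 1, (a x * u y + b x * v y))
      = a x * (∫ y in (0:ℝ)..1, u y) + b x * (∫ y in (0:ℝ)..1, v y) := by
    intro x
    rw [integral_add (hu'.const_mul _) (hv'.const_mul _), integral_const_mul,
      integral_const_mul, hioo1 u, hioo1 v]
  simp only [inner]
  rw [integral_add (ha'.mul_const _) (hb'.mul_const _), integral_mul_const,
    integral_mul_const, hioo2 a, hioo2 b]

lemma I_cc (i : ℤ) (n : ℕ) (hn : 0 < n) :
    ∫ x in (i:ℝ)..((i:ℝ)+1), Real.cosh (π*n*((i:ℝ)+1-x)) * Real.cosh (π*n*(x-(i:ℝ)))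
      = Real.cosh (π*n)/2 + Real.sinh (π*n)/(2*(π*n)) := by
  have hπ : (0:ℝ) < π*n := by positivity
  have hc : (-(2*π*(n:ℝ))) ≠ 0 := neg_ne_zero.mpr (by positivity)
  have hpt : ∀ x : ℝ, Real.cosh (π*n*((i:ℝ)+1-x)) * Real.cosh (π*n*(x-(i:ℝ)))
      = (Real.cosh (π*(n:ℝ)) + Real.cosh ((-(2*π*(n:ℝ)))*x + π*n*(2*(i:ℝ)+1)))/2 := by
    intro x
    have e1 : π*(n:ℝ) = (π*n*((i:ℝ)+1-x)) + (π*n*(x-(i:ℝ))) := by ring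
    have e2 : (-(2*π*(n:ℝ)))*x + π*n*(2*(i:ℝ)+1)
        = (π*n*((i:ℝ)+1-x)) - (π*n*(x-(i:ℝ))) := by ring
    have h1 := (congrArg Real.cosh e1).trans (Real.cosh_add _ _)
    have h2 := (congrArg Real.cosh e2).trans (Real.cosh_sub _ _)
    linear_combination (-h1 - h2)/2
  simp only [hpt]
  have hIc : IntervalIntegrable (fun x : ℝ => Real.cosh ((-(2*π*(n:ℝ)))*x + π*n*(2*(i:ℝ)+1)))
      volume (i:ℝ) ((i:ℝ)+1) := by
    apply Continuous.intervalIntegrable; continuity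
  rw [intervalIntegral.integral_div,
    intervalIntegral.integral_add (intervalIntegrable_const) hIc,
    intervalIntegral.integral_const, int_cosh_affine _ _ _ _ hc]
  have e3 : -(2*π*(n:ℝ))*((i:ℝ)+1) + π*n*(2*(i:ℝ)+1) = -(π*n) := by ring
  have e4 : -(2*π*(n:ℝ))*(i:ℝ) + π*n*(2*(i:ℝ)+1) = π*n := by ring
  rw [e3, e4, Real.sinh_neg]
  have e5 : ((i:ℝ)+1-(i:ℝ)) = 1 := by ring
  rw [e5, one_smul]
  field_simp
  ring

lemma I_ss (i : ℤ) (n : ℕ) (hn : 0 < n) :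
    ∫ x in (i:ℝ)..((i:ℝ)+1), Real.sinh (π*n*((i:ℝ)+1-x)) * Real.sinh (π*n*(x-(i:ℝ)))
      = Real.cosh (π*n)/2 - Real.sinh (π*n)/(2*(π*n)) := by
  have hπ : (0:ℝ) < π*n := by positivity
  have hc : (-(2*π*(n:ℝ))) ≠ 0 := neg_ne_zero.mpr (by positivity)
  have hpt : ∀ x : ℝ, Real.sinh (π*n*((i:ℝ)+1-x)) * Real.sinh (π*n*(x-(i:ℝ)))
      = (Real.cosh (π*(n:ℝ)) - Real.cosh ((-(2*π*(n:ℝ)))*x + π*n*(2*(i:ℝ)+1)))/2 := by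
    intro x
    have e1 : π*(n:ℝ) = (π*n*((i:ℝ)+1-x)) + (π*n*(x-(i:ℝ))) := by ring
    have e2 : (-(2*π*(n:ℝ)))*x + π*n*(2*(i:ℝ)+1)
        = (π*n*((i:ℝ)+1-x)) - (π*n*(x-(i:ℝ))) := by ring
    have h1 := (congrArg Real.cosh e1).trans (Real.cosh_add _ _)
    have h2 := (congrArg Real.cosh e2).trans (Real.cosh_sub _ _)
    linear_combination (h2 - h1)/2
  simp only [hpt]
  have hIc : IntervalIntegrable (fun x : ℝ => Real.cosh ((-(2*π*(n:ℝ)))*x + π*n*(2*(i:ℝ)+1)))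
      volume (i:ℝ) ((i:ℝ)+1) := by
    apply Continuous.intervalIntegrable; continuity
  rw [intervalIntegral.integral_div,
    intervalIntegral.integral_sub (intervalIntegrable_const) hIc,
    intervalIntegral.integral_const, int_cosh_affine _ _ _ _ hc]
  have e3 : -(2*π*(n:ℝ))*((i:ℝ)+1) + π*n*(2*(i:ℝ)+1) = -(π*n) := by ring
  have e4 : -(2*π*(n:ℝ))*(i:ℝ) + π*n*(2*(i:ℝ)+1) = π*n := by ring
  rw [e3, e4, Real.sinh_neg]
  have e5 : ((i:ℝ)+1-(i:ℝ)) = 1 := by ring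
  rw [e5, one_smul]
  field_simp
  ring

lemma I_c2 (i : ℤ) (n : ℕ) (hn : 0 < n) :
    ∫ x in (i:ℝ)..((i:ℝ)+1), Real.cosh (π*n*((i:ℝ)+1-x)) * Real.cosh (π*n*((i:ℝ)+1-x))
      = Real.sinh (2*π*n)/(4*(π*n)) + 1/2 := by
  have hπ : (0:ℝ) < π*n := by positivity
  have hc : (-(2*π*(n:ℝ))) ≠ 0 := neg_ne_zero.mpr (by positivity)
  have hpt : ∀ x : ℝ, Real.cosh (π*n*((i:ℝ)+1-x)) * Real.cosh (π*n*((i:ℝ)+1-x))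
      = (Real.cosh ((-(2*π*(n:ℝ)))*x + 2*π*n*((i:ℝ)+1)) + 1)/2 := by
    intro x
    have e2 : (-(2*π*(n:ℝ)))*x + 2*π*n*((i:ℝ)+1)
        = (π*n*((i:ℝ)+1-x)) + (π*n*((i:ℝ)+1-x)) := by ring
    rw [e2, Real.cosh_add]
    linear_combination (1/2) * Real.cosh_sq_sub_sinh_sq (π*(n:ℝ)*((i:ℝ)+1-x))
  simp only [hpt]
  have hIc : IntervalIntegrable (fun x : ℝ => Real.cosh ((-(2*π*(n:ℝ)))*x + 2*π*n*((i:ℝ)+1)))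
      volume (i:ℝ) ((i:ℝ)+1) := by
    apply Continuous.intervalIntegrable; continuity
  rw [intervalIntegral.integral_div,
    intervalIntegral.integral_add hIc (intervalIntegrable_const),
    intervalIntegral.integral_const, int_cosh_affine _ _ _ _ hc]
  have e3 : -(2*π*(n:ℝ))*((i:ℝ)+1) + 2*π*n*((i:ℝ)+1) = 0 := by ring
  have e4 : -(2*π*(n:ℝ))*(i:ℝ) + 2*π*n*((i:ℝ)+1) = 2*π*n := by ring
  rw [e3, e4, Real.sinh_zero]
  have e5 : ((i:ℝ)+1-(i:ℝ)) = 1 := by ring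
  rw [e5, one_smul]
  field_simp
  ring

lemma I_s2 (i : ℤ) (n : ℕ) (hn : 0 < n) :
    ∫ x in (i:ℝ)..((i:ℝ)+1), Real.sinh (π*n*((i:ℝ)+1-x)) * Real.sinh (π*n*((i:ℝ)+1-x))
      = Real.sinh (2*π*n)/(4*(π*n)) - 1/2 := by
  have hπ : (0:ℝ) < π*n := by positivity
  have hc : (-(2*π*(n:ℝ))) ≠ 0 := neg_ne_zero.mpr (by positivity)
  have hpt : ∀ x : ℝ, Real.sinh (π*n*((i:ℝ)+1-x)) * Real.sinh (π*n*((i:ℝ)+1-x))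
      = (Real.cosh ((-(2*π*(n:ℝ)))*x + 2*π*n*((i:ℝ)+1)) - 1)/2 := by
    intro x
    have e2 : (-(2*π*(n:ℝ)))*x + 2*π*n*((i:ℝ)+1)
        = (π*n*((i:ℝ)+1-x)) + (π*n*((i:ℝ)+1-x)) := by ring
    rw [e2, Real.cosh_add]
    linear_combination (-1/2) * Real.cosh_sq_sub_sinh_sq (π*(n:ℝ)*((i:ℝ)+1-x))
  simp only [hpt]
  have hIc : IntervalIntegrable (fun x : ℝ => Real.cosh ((-(2*π*(n:ℝ)))*x + 2*π*n*((i:ℝ)+1)))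
      volume (i:ℝ) ((i:ℝ)+1) := by
    apply Continuous.intervalIntegrable; continuity
  rw [intervalIntegral.integral_div,
    intervalIntegral.integral_sub hIc (intervalIntegrable_const),
    intervalIntegral.integral_const, int_cosh_affine _ _ _ _ hc]
  have e3 : -(2*π*(n:ℝ))*((i:ℝ)+1) + 2*π*n*((i:ℝ)+1) = 0 := by ring
  have e4 : -(2*π*(n:ℝ))*(i:ℝ) + 2*π*n*((i:ℝ)+1) = 2*π*n := by ring
  rw [e3, e4, Real.sinh_zero]
  have e5 : ((i:ℝ)+1-(i:ℝ)) = 1 := by ring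
  rw [e5, one_smul]
  field_simp
  ring

set_option maxHeartbeats 1000000 in
theorem harmonic_extension_inner_products (i : ℤ) (n m : ℕ) (hn : 0 < n) (hm : 0 < m) :
    (n ≠ m → ∫ p in OmegaSq i, gradDot (Z0 i n) (Z0 i m) p = 0) ∧
    (∫ p in OmegaSq i, gradDot (Z0 i n) (Z1 i n) p = -(π * n / (2 * Real.sinh (π * n)))) ∧
    (∫ p in OmegaSq i, gradDot (Z0 i n) (Z0 i n) p
      = π * n * Real.sinh (2 * π * n) / (4 * (Real.sinh (π * n)) ^ 2)) := by
  have hπn : (0:ℝ) < π*n := by positivity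
  have hπm : (0:ℝ) < π*m := by positivity
  have hsn : Real.sinh (π*(n:ℝ)) ≠ 0 := ne_of_gt (by
    rw [show (0:ℝ) = Real.sinh 0 from (Real.sinh_zero).symm]
    exact Real.sinh_lt_sinh.mpr hπn)
  have hsm : Real.sinh (π*(m:ℝ)) ≠ 0 := ne_of_gt (by
    rw [show (0:ℝ) = Real.sinh 0 from (Real.sinh_zero).symm]
    exact Real.sinh_lt_sinh.mpr hπm)
  refine ⟨?_, ?_, ?_⟩
  · -- part (a)
    intro hnm
    have hpt : ∀ p : ℝ × ℝ, gradDot (Z0 i n) (Z0 i m) p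
        = (fun x => (π*n*(π*m)/(Real.sinh (π*(n:ℝ))*Real.sinh (π*(m:ℝ))))
            * (Real.cosh (π*n*((i:ℝ)+1-x)) * Real.cosh (π*m*((i:ℝ)+1-x)))) p.1
            * (fun y => Real.sin (π*n*y) * Real.sin (π*m*y)) p.2
          + (fun x => (π*n*(π*m)/(Real.sinh (π*(n:ℝ))*Real.sinh (π*(m:ℝ))))
            * (Real.sinh (π*n*((i:ℝ)+1-x)) * Real.sinh (π*m*((i:ℝ)+1-x)))) p.1
            * (fun y => Real.cos (π*n*y) * Real.cos (π*m*y)) p.2 := by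
      intro p
      simp only [gradDot, fderiv_Z0_apply]
      norm_num
      field_simp
    rw [integral_prod_split i (gradDot (Z0 i n) (Z0 i m))
      (fun x => (π*n*(π*m)/(Real.sinh (π*(n:ℝ))*Real.sinh (π*(m:ℝ)))) * (Real.cosh (π*n*((i:ℝ)+1-x)) * Real.cosh (π*m*((i:ℝ)+1-x)))) (fun x => (π*n*(π*m)/(Real.sinh (π*(n:ℝ))*Real.sinh (π*(m:ℝ)))) * (Real.sinh (π*n*((i:ℝ)+1-x)) * Real.sinh (π*m*((i:ℝ)+1-x)))) (fun y => Real.sin (π*n*y) * Real.sin (π*m*y)) (fun y => Real.cos (π*n*y) * Real.cos (π*m*y)) hpt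
      (by fun_prop) (by fun_prop) (by fun_prop) (by fun_prop),
      J_ss n m hn hm, J_cc n m hn hm, if_neg hnm]
    ring
  · -- part (b)
    have hpt : ∀ p : ℝ × ℝ, gradDot (Z0 i n) (Z1 i n) p
        = (fun x => -(π*n*(π*n)/(Real.sinh (π*(n:ℝ))*Real.sinh (π*(n:ℝ))))
            * (Real.cosh (π*n*((i:ℝ)+1-x)) * Real.cosh (π*n*(x-(i:ℝ))))) p.1
            * (fun y => Real.sin (π*n*y) * Real.sin (π*n*y)) p.2
          + (fun x => (π*n*(π*n)/(Real.sinh (π*(n:ℝ))*Real.sinh (π*(n:ℝ))))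
            * (Real.sinh (π*n*((i:ℝ)+1-x)) * Real.sinh (π*n*(x-(i:ℝ))))) p.1
            * (fun y => Real.cos (π*n*y) * Real.cos (π*n*y)) p.2 := by
      intro p
      simp only [gradDot, fderiv_Z0_apply, fderiv_Z1_apply]
      norm_num
      field_simp
    rw [integral_prod_split i (gradDot (Z0 i n) (Z1 i n))
      (fun x => -(π*n*(π*n)/(Real.sinh (π*(n:ℝ))*Real.sinh (π*(n:ℝ)))) * (Real.cosh (π*n*((i:ℝ)+1-x)) * Real.cosh (π*n*(x-(i:ℝ))))) (fun x => (π*n*(π*n)/(Real.sinh (π*(n:ℝ))*Real.sinh (π*(n:ℝ)))) * (Real.sinh (π*n*((i:ℝ)+1-x)) * Real.sinh (π*n*(x-(i:ℝ))))) (fun y => Real.sin (π*n*y) * Real.sin (π*n*y)) (fun y => Real.cos (π*n*y) * Real.cos (π*n*y)) hpt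
      (by fun_prop) (by fun_prop) (by fun_prop) (by fun_prop),
      J_ss n n hn hn, J_cc n n hn hn, if_pos rfl,
      intervalIntegral.integral_const_mul, intervalIntegral.integral_const_mul,
      I_cc i n hn, I_ss i n hn]
    field_simp
    ring
  · -- part (c)
    have hpt : ∀ p : ℝ × ℝ, gradDot (Z0 i n) (Z0 i n) p
        = (fun x => (π*n*(π*n)/(Real.sinh (π*(n:ℝ))*Real.sinh (π*(n:ℝ))))
            * (Real.cosh (π*n*((i:ℝ)+1-x)) * Real.cosh (π*n*((i:ℝ)+1-x)))) p.1
            * (fun y => Real.sin (π*n*y) * Real.sin (π*n*y)) p.2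
          + (fun x => (π*n*(π*n)/(Real.sinh (π*(n:ℝ))*Real.sinh (π*(n:ℝ))))
            * (Real.sinh (π*n*((i:ℝ)+1-x)) * Real.sinh (π*n*((i:ℝ)+1-x)))) p.1
            * (fun y => Real.cos (π*n*y) * Real.cos (π*n*y)) p.2 := by
      intro p
      simp only [gradDot, fderiv_Z0_apply]
      norm_num
      field_simp
    rw [integral_prod_split i (gradDot (Z0 i n) (Z0 i n))
      (fun x => (π*n*(π*n)/(Real.sinh (π*(n:ℝ))*Real.sinh (π*(n:ℝ)))) * (Real.cosh (π*n*((i:ℝ)+1-x)) * Real.cosh (π*n*((i:ℝ)+1-x)))) (fun x => (π*n*(π*n)/(Real.sinh (π*(n:ℝ))*Real.sinh (π*(n:ℝ)))) * (Real.sinh (π*n*((i:ℝ)+1-x)) * Real.sinh (π*n*((i:ℝ)+1-x)))) (fun y => Real.sin (π*n*y) * Real.sin (π*n*y)) (fun y => Real.cos (π*n*y) * Real.cos (π*n*y)) hpt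
      (by fun_prop) (by fun_prop) (by fun_prop) (by fun_prop),
      J_ss n n hn hn, J_cc n n hn hn, if_pos rfl,
      intervalIntegral.integral_const_mul, intervalIntegral.integral_const_mul,
      I_c2 i n hn, I_s2 i n hn]
    have h2 : Real.sinh (2*π*(n:ℝ)) = 2 * Real.sinh (π*(n:ℝ)) * Real.cosh (π*(n:ℝ)) := by
      rw [show 2*π*(n:ℝ) = π*(n:ℝ) + π*(n:ℝ) by ring, Real.sinh_add]; ring
    rw [h2]
    field_simp
    ring
end

section
/- Let n_s ∈ ℕ and define, for square-summable sequences with Σ α_n² n < ∞, the quantities: numerator N(α,β) = Σ_{n>n_s} α_n β_n (πn/(2 sinh(πn))), and denominators D₀(α) = (Σ_{n>n_s} α_n² πn sinh(2πn)/(4 sinh²(πn)))^{1/2}, D₁(β) = (Σ_{n≥1} β_n² πn sinh(2πn)/(4 sinh²(πn)))^{1/2}. Then for all admissible nonzero α supported on n > n_s and nonzero β, |N(α,β)| / (D₀(α) D₁(β)) ≤ 1/sinh(π(n_s+1)) ≤ (2/(1−e^{−2π})) e^{−π(n_s+1)}. -/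
set_option maxHeartbeats 1000000


open Real

private lemma sqrt_mul_le_half_add (x y : ℝ) (hx : 0 ≤ x) (hy : 0 ≤ y) :
    Real.sqrt (x * y) ≤ (x + y) / 2 := by
  have h : x * y ≤ ((x + y) / 2) ^ 2 := by nlinarith [sq_nonneg (x - y)]
  calc Real.sqrt (x * y) ≤ Real.sqrt (((x + y) / 2) ^ 2) := Real.sqrt_le_sqrt h
    _ = (x + y) / 2 := Real.sqrt_sq (by positivity)

theorem fast_interaction_estimate
    (ns : ℕ) (α β : ℕ → ℝ)
    -- α is supported on n > ns
    (hαsupp : ∀ n ≤ ns, α n = 0)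
    (hαsum : Summable (fun n : ℕ => α n ^ 2 * n))
    (hβsum : Summable (fun n : ℕ => β n ^ 2 * n))
    (Nval D₀ D₁ : ℝ)
    (hN : Nval = ∑' n : ℕ, (if ns < n then α n * β n * (π * n / (2 * Real.sinh (π * n))) else 0))
    (hD₀ : D₀ = Real.sqrt (∑' n : ℕ,
      (if ns < n then α n ^ 2 * (π * n * Real.sinh (2 * π * n) / (4 * (Real.sinh (π * n)) ^ 2)) else 0)))
    (hD₁ : D₁ = Real.sqrt (∑' n : ℕ,
      (if 1 ≤ n then β n ^ 2 * (π * n * Real.sinh (2 * π * n) / (4 * (Real.sinh (π * n)) ^ 2)) else 0)))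
    (hD₀pos : 0 < D₀) (hD₁pos : 0 < D₁) :
    |Nval| / (D₀ * D₁) ≤ 1 / Real.sinh (π * (ns + 1)) ∧
    1 / Real.sinh (π * (ns + 1))
      ≤ (2 / (1 - Real.exp (-(2 * π)))) * Real.exp (-(π * (ns + 1))) := by
  have hπ : 0 < π := Real.pi_pos
  set s : ℝ := π * (ns + 1) with hs
  have hspos : 0 < s := by positivity
  have hsinhs : 0 < Real.sinh s := Real.sinh_pos_iff.2 hspos
  constructor
  · -- main estimate
    set w : ℕ → ℝ := fun n =>
      π * n * Real.sinh (2 * π * n) / (4 * (Real.sinh (π * n)) ^ 2) with hw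
    set A : ℕ → ℝ := fun n => if ns < n then α n ^ 2 * w n else 0 with hA
    set B : ℕ → ℝ := fun n => if 1 ≤ n then β n ^ 2 * w n else 0 with hB
    set T : ℕ → ℝ := fun n =>
      if ns < n then α n * β n * (π * n / (2 * Real.sinh (π * n))) else 0 with hT
    -- basic positivity facts about w
    have hwpos : ∀ n : ℕ, 1 ≤ n → 0 < w n := by
      intro n hn
      have h1 : (1:ℝ) ≤ n := by exact_mod_cast hn
      have hpn : 0 < π * n := by positivity
      have hsn : 0 < Real.sinh (π * n) := Real.sinh_pos_iff.2 hpn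
      have hs2n : 0 < Real.sinh (2 * π * n) := Real.sinh_pos_iff.2 (by positivity)
      have hnum : 0 < π * n * Real.sinh (2 * π * n) := by positivity
      exact div_pos hnum (by positivity)
    -- bound w n ≤ K * n
    set K : ℝ := π * Real.cosh π / (2 * Real.sinh π) with hK
    have hsp : 0 < Real.sinh π := Real.sinh_pos_iff.2 hπ
    have hcp : 0 < Real.cosh π := Real.cosh_pos _
    have hKpos : 0 < K := by positivity
    have hwle : ∀ n : ℕ, 1 ≤ n → w n ≤ K * n := by
      intro n hn
      have h1 : (1:ℝ) ≤ n := by exact_mod_cast hn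
      have hpn : 0 < π * n := by positivity
      have hsn : 0 < Real.sinh (π * n) := Real.sinh_pos_iff.2 hpn
      have hcn : 0 < Real.cosh (π * n) := Real.cosh_pos _
      have hmul : Real.sinh (2 * π * n) = 2 * Real.sinh (π * n) * Real.cosh (π * n) := by
        rw [show 2 * π * n = 2 * (π * n) by ring, Real.sinh_two_mul]
      have hcoth : Real.sinh π * Real.cosh (π * n) ≤ Real.cosh π * Real.sinh (π * n) := by
        have hle : π ≤ π * n := by nlinarith
        have h2 : Real.sinh (π - π * n) ≤ 0 := Real.sinh_nonpos_iff.2 (by linarith)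
        rw [Real.sinh_sub] at h2
        linarith
      rw [hw]; simp only
      rw [hmul, div_le_iff₀ (by positivity), hK, div_mul_eq_mul_div,
        div_mul_eq_mul_div, le_div_iff₀ (by positivity : (0:ℝ) < 2 * Real.sinh π)]
      nlinarith [mul_le_mul_of_nonneg_left hcoth (le_of_lt (mul_pos hpn hsn)),
        mul_pos hpn hsn]
    -- nonnegativity and summability of A, B
    have hAnn : ∀ n, 0 ≤ A n := by
      intro n; rw [hA]; simp only
      split
      · next h =>
        exact mul_nonneg (sq_nonneg _) (le_of_lt (hwpos n (by omega)))
      · exact le_rfl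
    have hBnn : ∀ n, 0 ≤ B n := by
      intro n; rw [hB]; simp only
      split
      · next h => exact mul_nonneg (sq_nonneg _) (le_of_lt (hwpos n h))
      · exact le_rfl
    have hAsum : Summable A := by
      apply Summable.of_nonneg_of_le hAnn (f := fun n => K * (α n ^ 2 * n))
      · intro n
        rw [hA]; simp only
        split
        · next h =>
          have := hwle n (by omega)
          have hα2 : (0:ℝ) ≤ α n ^ 2 := sq_nonneg _
          calc α n ^ 2 * w n ≤ α n ^ 2 * (K * n) := by
                exact mul_le_mul_of_nonneg_left this hα2
            _ = K * (α n ^ 2 * n) := by ring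
        · positivity
      · exact hαsum.mul_left K
    have hBsum : Summable B := by
      apply Summable.of_nonneg_of_le hBnn (f := fun n => K * (β n ^ 2 * n))
      · intro n
        rw [hB]; simp only
        split
        · next h =>
          have := hwle n h
          calc β n ^ 2 * w n ≤ β n ^ 2 * (K * n) :=
                mul_le_mul_of_nonneg_left this (sq_nonneg _)
            _ = K * (β n ^ 2 * n) := by ring
        · positivity
      · exact hβsum.mul_left K
    -- sums equal squares of D₀, D₁
    have hSA : ∑' n, A n = D₀ ^ 2 := by
      rw [hD₀, Real.sq_sqrt (tsum_nonneg hAnn)]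
    have hSB : ∑' n, B n = D₁ ^ 2 := by
      rw [hD₁, Real.sq_sqrt (tsum_nonneg hBnn)]
    -- pointwise bound: |T n| ≤ (1 / sinh s) * sqrt (A n * B n)
    have hTle : ∀ n, |T n| ≤ (1 / Real.sinh s) * Real.sqrt (A n * B n) := by
      intro n
      rw [hT, hA, hB]; simp only
      by_cases h : ns < n
      · rw [if_pos h, if_pos h, if_pos (by omega : 1 ≤ n)]
        have h1 : (1:ℝ) ≤ n := by exact_mod_cast (by omega : 1 ≤ n)
        have hpn : 0 < π * n := by positivity
        have hsn : 0 < Real.sinh (π * n) := Real.sinh_pos_iff.2 hpn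
        have hcn : 0 < Real.cosh (π * n) := Real.cosh_pos _
        have hwn : 0 < w n := hwpos n (by omega)
        have hsqrt : Real.sqrt (α n ^ 2 * w n * (β n ^ 2 * w n))
            = |α n| * |β n| * w n := by
          rw [show α n ^ 2 * w n * (β n ^ 2 * w n) = (α n * β n * w n) ^ 2 by ring,
            Real.sqrt_sq_eq_abs, abs_mul, abs_mul, abs_of_pos hwn]
        rw [hsqrt, abs_mul, abs_mul, abs_of_pos (div_pos hpn (by positivity))]
        -- need: |α||β| * (πn/(2 sinh πn)) ≤ (1/sinh s) * (|α||β| w n)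
        have hkey : π * n / (2 * Real.sinh (π * n)) ≤ (1 / Real.sinh s) * w n := by
          have hmul : Real.sinh (2 * π * n) = 2 * Real.sinh (π * n) * Real.cosh (π * n) := by
            rw [show 2 * π * n = 2 * (π * n) by ring, Real.sinh_two_mul]
          have hsle : Real.sinh s ≤ Real.cosh (π * n) := by
            have h2 : s ≤ π * n := by
              rw [hs]
              have : ((ns:ℝ) + 1) ≤ n := by exact_mod_cast h
              nlinarith
            calc Real.sinh s ≤ Real.sinh (π * n) := Real.sinh_le_sinh.2 h2
              _ ≤ Real.cosh (π * n) := by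
                  have := Real.cosh_sub_sinh (π * n)
                  nlinarith [Real.exp_pos (-(π * n))]
          rw [hw]; simp only
          rw [hmul, div_le_iff₀ (show (0:ℝ) < 2 * Real.sinh (π * n) by positivity)]
          have heq : 1 / Real.sinh s *
              (π * n * (2 * Real.sinh (π * n) * Real.cosh (π * n)) /
                (4 * Real.sinh (π * n) ^ 2)) * (2 * Real.sinh (π * n))
              = π * n * Real.cosh (π * n) / Real.sinh s := by
            field_simp
            ring
          rw [heq, le_div_iff₀ hsinhs]
          nlinarith [mul_le_mul_of_nonneg_left hsle (le_of_lt hpn)]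
        calc |α n| * |β n| * (π * n / (2 * Real.sinh (π * n)))
            ≤ |α n| * |β n| * ((1 / Real.sinh s) * w n) := by
              exact mul_le_mul_of_nonneg_left hkey (by positivity)
          _ = 1 / Real.sinh s * (|α n| * |β n| * w n) := by ring
      · rw [if_neg h, if_neg h, abs_zero]
        have : 0 ≤ B n := hBnn n
        positivity
    -- AM-GM with weight t = D₁ / D₀
    set t : ℝ := D₁ / D₀ with ht
    have htpos : 0 < t := div_pos hD₁pos hD₀pos
    set g : ℕ → ℝ := fun n =>
      1 / Real.sinh s * ((t * A n + B n / t) / 2) with hg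
    have hTg : ∀ n, |T n| ≤ g n := by
      intro n
      refine le_trans (hTle n) ?_
      rw [hg]; simp only
      apply mul_le_mul_of_nonneg_left _ (by positivity)
      have h1 : A n * B n = (t * A n) * (B n / t) := by
        field_simp
      rw [h1]
      exact sqrt_mul_le_half_add _ _ (mul_nonneg htpos.le (hAnn n)) (div_nonneg (hBnn n) htpos.le)
    have hgsum : Summable g := by
      apply Summable.mul_left
      apply Summable.div_const
      exact ((hAsum.mul_left t).add (hBsum.div_const t))
    have hTsum : Summable T := by
      apply Summable.of_norm
      apply Summable.of_nonneg_of_le (fun n => norm_nonneg _) _ hgsum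
      intro n; exact hTg n
    have habs : |Nval| ≤ ∑' n, g n := by
      have h1 : ‖∑' n, T n‖ ≤ ∑' n, ‖T n‖ :=
        norm_tsum_le_tsum_norm (by simpa [Real.norm_eq_abs] using hTsum.abs)
      simp only [Real.norm_eq_abs] at h1
      calc |Nval| = |∑' n, T n| := by rw [hN]
        _ ≤ ∑' n, |T n| := h1
        _ ≤ ∑' n, g n := Summable.tsum_le_tsum (fun n => hTg n) hTsum.abs hgsum
    have hgval : ∑' n, g n = 1 / Real.sinh s * (D₀ * D₁) := by
      have h1 : ∑' n, g n
          = 1 / Real.sinh s * ((t * ∑' n, A n + (∑' n, B n) / t) / 2) := by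
        rw [hg]
        rw [tsum_mul_left, tsum_div_const, Summable.tsum_add (hAsum.mul_left t) (hBsum.div_const t),
          tsum_mul_left, tsum_div_const]
      rw [h1, hSA, hSB, ht]
      field_simp
      ring
    rw [div_le_iff₀ (by positivity)]
    rw [hgval] at habs
    exact habs
  · -- crude exponential bound
    have hE : Real.exp (-(2 * π)) < 1 := Real.exp_lt_one_iff.2 (by linarith)
    have hE0 : 0 < 1 - Real.exp (-(2 * π)) := by linarith
    have hes : 0 < Real.exp (-s) := Real.exp_pos _
    rw [div_le_iff₀ hsinhs, div_mul_eq_mul_div, div_mul_eq_mul_div, le_div_iff₀ hE0]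
    have hsinh : Real.sinh s = (Real.exp s - Real.exp (-s)) / 2 := Real.sinh_eq s
    have hinv : Real.exp (-s) * Real.exp s = 1 := by
      rw [← Real.exp_add]; simp
    have h2s : Real.exp (-(2 * s)) ≤ Real.exp (-(2 * π)) := by
      apply Real.exp_le_exp.2
      have h0 : (0:ℝ) ≤ (ns:ℝ) := Nat.cast_nonneg ns
      have : π ≤ s := by rw [hs]; nlinarith [h0]
      linarith
    have h2s' : Real.exp (-(2 * s)) = Real.exp (-s) * Real.exp (-s) := by
      rw [← Real.exp_add]; ring_nf
    nlinarith [Real.exp_pos s]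
end
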